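/- (Equivalence of CRC and RC, full network) Let (V,E) be a complete communication network on n nodes, {(X_v,Y_v) : v∈V} a partition of the global data (X,Y) with |X| = m, and θ a scale-invariant parameter mapping with s additive. Run RC on (X,Y) with learning rate lr > 0 and uniform initialization s_g⁰, and run CRC with equivalent sample size m⁰ = m/(lr·n), one local iteration per round, and uniform initialization s⁰ satisfying s_g⁰ = (m/m⁰)·s⁰. Then for every round t ≥ 1 and every node v, the aggregated CRC statistic satisfies θ(s̄_v^t) = θ(s_g^{t-1}); in fact (m/m⁰)·s̄_v^t = s_g^{t-1}. -/

import Mathlib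

private lemma sum_map_sum {V A B : Type*} [Fintype V] (D : V → Multiset A)
    (f : A → B) [AddCommMonoid B] :
    ((∑ v, D v).map f).sum = ∑ v, ((D v).map f).sum := by
  classical
  induction (Finset.univ : Finset V) using Finset.induction with
  | empty => simp
  | insert _ _ h ih => simp [Finset.sum_insert h, ih]

/-- Equivalence of CRC on a complete communication network and RC on the
global data: at every round the aggregated CRC statistics at each node yield
the same parameters as RC at the previous iteration, and in fact
`(m/m⁰)·s̄_v^t = s_g^{t-1}`. -/
theorem stmt_11 {X Y : Type*} [Fintype Y] {k o : ℕ}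
    {V : Type*} [Fintype V] (n : ℕ) (hn : Fintype.card V = n) (hn0 : 0 < n)
    (θ : (Fin k → ℝ) → Fin o → ℝ)
    (hinv : ∀ c : ℝ, 0 < c → ∀ s : Fin k → ℝ, θ (c • s) = θ s)
    (s : X × Y → Fin k → ℝ) (p : (Fin o → ℝ) → X → Y → ℝ)
    (D : V → Multiset (X × Y)) (Dg : Multiset (X × Y)) (hpart : Dg = ∑ v, D v)
    (m : ℝ) (hm : m = (Multiset.card Dg : ℝ)) (hmpos : 0 < m)
    (lr : ℝ) (hlr : 0 < lr)
    (m0 : ℝ) (hm0 : m0 = m / (lr * n))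
    (s0 : Fin k → ℝ)
    (sg : ℕ → Fin k → ℝ) (sbar sloc : V → ℕ → Fin k → ℝ)
    (hg0 : sg 0 = (m / m0) • s0)
    (hloc0 : ∀ v, sloc v 0 = s0)
    (hbar : ∀ v t, sbar v (t + 1) = (n : ℝ)⁻¹ • ∑ u, sloc u t)
    (hloc : ∀ v t, sloc v (t + 1) = sbar v (t + 1)
      + ((D v).map s).sum
      - (((D v).map Prod.fst).map
          (fun x => ∑ y', p (θ (sbar v (t + 1))) x y' • s (x, y'))).sum)
    (hg : ∀ t, sg (t + 1) = sg t
      + lr • ((Dg.map s).sum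
        - ((Dg.map Prod.fst).map
            (fun x => ∑ y', p (θ (sg t)) x y' • s (x, y'))).sum)) :
    ∀ t : ℕ, ∀ v : V,
      θ (sbar v (t + 1)) = θ (sg t) ∧ (m / m0) • sbar v (t + 1) = sg t := by
  have hnR : (0:ℝ) < n := by exact_mod_cast hn0
  have hnne : (n:ℝ) ≠ 0 := ne_of_gt hnR
  have hm0pos : 0 < m0 := by rw [hm0]; positivity
  have hc : m / m0 = lr * n := by
    rw [hm0]; field_simp
  have hcpos : 0 < m / m0 := div_pos hmpos hm0pos
  have hcne : m / m0 ≠ 0 := ne_of_gt hcpos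
  have key : ∀ t : ℕ, ∀ v : V, (m / m0) • sbar v (t + 1) = sg t := by
    intro t
    induction t with
    | zero =>
      intro v
      rw [hbar]
      simp only [hloc0, Finset.sum_const, Finset.card_univ, hn, hg0]
      rw [smul_smul, ← Nat.cast_smul_eq_nsmul ℝ, smul_smul]
      congr 1
      field_simp
    | succ t ih =>
      intro v
      have hθ : ∀ u : V, θ (sbar u (t + 1)) = θ (sg t) := by
        intro u
        rw [← ih u, hinv _ hcpos]
      rw [hbar]
      simp only [hloc, hθ]
      have hsbar : ∀ u : V, sbar u (t + 1) = (m / m0)⁻¹ • sg t := by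
        intro u
        rw [← ih u, smul_smul, inv_mul_cancel₀ hcne, one_smul]
      -- abbreviate the data terms
      set A : Fin k → ℝ := (Dg.map s).sum with hA
      set B : Fin k → ℝ := ((Dg.map Prod.fst).map
          (fun x => ∑ y', p (θ (sg t)) x y' • s (x, y'))).sum with hB
      have hAsum : ∑ u : V, ((D u).map s).sum = A := by
        rw [hA, hpart, sum_map_sum]
      have hBsum : ∑ u : V, (((D u).map Prod.fst).map
          (fun x => ∑ y', p (θ (sg t)) x y' • s (x, y'))).sum = B := by
        rw [hB, hpart]
        simp only [Multiset.map_map]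
        rw [sum_map_sum]
      rw [Finset.sum_sub_distrib, Finset.sum_add_distrib, hAsum, hBsum]
      simp only [hsbar, Finset.sum_const, Finset.card_univ, hn]
      rw [hg t, ← Nat.cast_smul_eq_nsmul ℝ]
      have hlrne : lr ≠ 0 := ne_of_gt hlr
      have hmne : m ≠ 0 := ne_of_gt hmpos
      have hm0ne : m0 ≠ 0 := ne_of_gt hm0pos
      match_scalars <;> rw [hm0] <;> field_simp <;> ring
  intro t v
  refine ⟨?_, key t v⟩
  rw [← key t v, hinv _ hcpos]
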